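/- arXiv:1508.06185 — 4 statements merged into one kernel-verified Lean document; each statement's English description precedes it below -/
import Mathlib

section
/- Every natural number is the sum of a bounded number (depending only on the base d) of palindromes in base d; specifically, there exists a constant C such that for every integer d ≥ 2, every natural number n can be written as a sum of at most C·d palindromes in base d. -/
def IsPalindrome (d n : ℕ) : Prop := (Nat.digits d n).reverse = Nat.digits d n

/-!
Peel palindromes off from both ends at once. With `α = 2d + 2`, a sum of `α` palindromes of even
length `2k + 2`, each with outer digit `1`, realises every "two-sided digit string"
`Σ xᵢ (dⁱ + d^(2k+1-i))` with `x₀ = α` and `xᵢ ≤ α (d - 1)`. The inner digits are chosen from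
the outside in: for `T` in the window `[(d+1) d^(e+2), (d²+d+1) d^(e+2)]` there is `a ≤ d² + d`
with `a ≡ T (mod d)` such that `(T - a (1 + d^(e+2))) / d` lies in the window at level `e`. When
the middle is reached, the remainder `r d^m` with `r < d⁴` costs `4d` more palindromes, as
`x d^m = x (d^m - 1) + x` and `d^m - 1` is a repdigit.

To enter the window, subtract from `n` the offset `α (1 + d^(2m+3)) + (d+1) d^(2m+2)`, bring the
rest below `d^(2m+4)` greedily with at most `d + 1` copies of each repdigit `d^j - 1`, and split
off its last digit. This gives `11d + 8` palindromes for `d^(2m+7) ≤ n < d^(2m+9)`, and greedy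
repdigits handle `n < d^7`.
-/

section

open List

variable {d : ℕ}

theorem isPalindrome_zero (d : ℕ) : IsPalindrome d 0 := by
  simp [IsPalindrome]

theorem isPalindrome_of_lt {n : ℕ} (hn : n < d) : IsPalindrome d n := by
  rcases eq_or_ne n 0 with rfl | h0
  · exact isPalindrome_zero d
  · simp [IsPalindrome, Nat.digits_of_lt d n h0 hn]

theorem isPalindrome_ofDigits (hd : 1 < d) {l : List ℕ} (hl : ∀ x ∈ l, x < d)
    (hrev : l.reverse = l) (hlast : ∀ h : l ≠ [], l.getLast h ≠ 0) :
    IsPalindrome d (Nat.ofDigits d l) := by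
  rw [IsPalindrome, Nat.digits_ofDigits d hd l hl hlast, hrev]

theorem Nat.ofDigits_replicate_sub_one (hd : 0 < d) (m : ℕ) :
    Nat.ofDigits d (replicate m (d - 1)) = d ^ m - 1 := by
  induction m with
  | zero => simp
  | succ m ih =>
    have hpos : 0 < d ^ m := Nat.pow_pos hd
    rw [replicate_succ, Nat.ofDigits_cons, ih, pow_succ', Nat.mul_sub_one]
    have : d ≤ d * d ^ m := Nat.le_mul_of_pos_right d hpos
    omega

theorem isPalindrome_pow_sub_one (hd : 1 < d) (m : ℕ) : IsPalindrome d (d ^ m - 1) := by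
  rw [← Nat.ofDigits_replicate_sub_one (by omega)]
  refine isPalindrome_ofDigits hd (fun x hx => ?_) reverse_replicate fun h => ?_
  · rw [eq_of_mem_replicate hx]; omega
  · rw [getLast_replicate]; omega

theorem isPalindrome_ofDigits_append_reverse (hd : 1 < d) {a : ℕ} {s : List ℕ} (ha : 0 < a)
    (hs : ∀ x ∈ a :: s, x < d) :
    IsPalindrome d (Nat.ofDigits d (a :: s ++ (a :: s).reverse)) := by
  refine isPalindrome_ofDigits hd ?_ (by simp) fun _ => ?_
  · intro x hx
    simp only [mem_append, mem_reverse, or_self] at hx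
    exact hs x hx
  · simp only [reverse_cons, ← append_assoc, getLast_append_singleton]
    omega

def IsSumOfPalindromes (d k n : ℕ) : Prop :=
  ∃ l : List ℕ, l.length ≤ k ∧ (∀ p ∈ l, IsPalindrome d p) ∧ l.sum = n

theorem IsSumOfPalindromes.zero (d k : ℕ) : IsSumOfPalindromes d k 0 :=
  ⟨[], by simp, by simp, rfl⟩

theorem IsSumOfPalindromes.mono {k k' n : ℕ} (h : IsSumOfPalindromes d k n) (hk : k ≤ k') :
    IsSumOfPalindromes d k' n :=
  let ⟨l, hl, hpal, hsum⟩ := h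
  ⟨l, hl.trans hk, hpal, hsum⟩

theorem IsSumOfPalindromes.add {k₁ k₂ n₁ n₂ : ℕ} (h₁ : IsSumOfPalindromes d k₁ n₁)
    (h₂ : IsSumOfPalindromes d k₂ n₂) : IsSumOfPalindromes d (k₁ + k₂) (n₁ + n₂) := by
  obtain ⟨l₁, hl₁, hpal₁, rfl⟩ := h₁
  obtain ⟨l₂, hl₂, hpal₂, rfl⟩ := h₂
  refine ⟨l₁ ++ l₂, by simp; omega, fun p hp => ?_, List.sum_append⟩
  rcases mem_append.mp hp with hp | hp
  exacts [hpal₁ p hp, hpal₂ p hp]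

theorem IsPalindrome.isSumOfPalindromes_mul {p : ℕ} (h : IsPalindrome d p) (t : ℕ) :
    IsSumOfPalindromes d t (t * p) :=
  ⟨replicate t p, by simp, fun q hq => eq_of_mem_replicate hq ▸ h, by simp⟩

theorem IsPalindrome.isSumOfPalindromes {p : ℕ} (h : IsPalindrome d p) :
    IsSumOfPalindromes d 1 p := by
  simpa using h.isSumOfPalindromes_mul 1

theorem isSumOfPalindromes_mul_pow_of_lt (hd : 1 < d) {x : ℕ} (hx : x < d) (m : ℕ) :
    IsSumOfPalindromes d d (x * d ^ m) := by
  have h : x * d ^ m = x * (d ^ m - 1) + x := by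
    have : x ≤ x * d ^ m := Nat.le_mul_of_pos_right x (Nat.pow_pos (by omega))
    rw [Nat.mul_sub_one]; omega
  rw [h]
  exact ((isPalindrome_pow_sub_one hd m).isSumOfPalindromes_mul x).add
    (isPalindrome_of_lt hx).isSumOfPalindromes |>.mono (by omega)

theorem isSumOfPalindromes_mul_pow (hd : 1 < d) {j r : ℕ} (hr : r < d ^ j) (m : ℕ) :
    IsSumOfPalindromes d (j * d) (r * d ^ m) := by
  induction j generalizing r m with
  | zero =>
    obtain rfl : r = 0 := by simpa using hr
    simpa using IsSumOfPalindromes.zero d 0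
  | succ j ih =>
    have hsplit : r * d ^ m = r % d * d ^ m + r / d * d ^ (m + 1) := by
      conv_lhs => rw [← Nat.mod_add_div r d]
      ring
    have hq : r / d < d ^ j := by
      rw [Nat.div_lt_iff_lt_mul (by omega), ← pow_succ]; exact hr
    rw [hsplit, Nat.succ_mul, add_comm (j * d)]
    exact (isSumOfPalindromes_mul_pow_of_lt hd (Nat.mod_lt r (by omega)) m).add (ih hq (m + 1))

theorem div_pow_sub_one_le (hd : 1 < d) {m x : ℕ} (hm : 1 ≤ m) (hx : x < d ^ (m + 1)) :
    x / (d ^ m - 1) ≤ d + 1 := by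
  have hdm : d ≤ d ^ m := by simpa using Nat.pow_le_pow_right (by omega) hm
  obtain ⟨P, hP⟩ : ∃ P, d ^ m = P + 1 := ⟨d ^ m - 1, by omega⟩
  rw [pow_succ, hP] at hx
  rw [hP, Nat.add_sub_cancel, Nat.lt_succ_iff.symm, Nat.div_lt_iff_lt_mul (by omega)]
  nlinarith

theorem exists_isSumOfPalindromes_add_lt_pow (hd : 1 < d) {m : ℕ} (hm : 1 ≤ m) (k : ℕ)
    {x : ℕ} (hx : x < d ^ (m + k)) :
    ∃ y z, IsSumOfPalindromes d (k * (d + 1)) y ∧ z < d ^ m ∧ x = y + z := by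
  induction k generalizing x with
  | zero => exact ⟨0, x, IsSumOfPalindromes.zero d _, hx, by simp⟩
  | succ k ih =>
    have hF : 0 < d ^ (m + k) - 1 := by
      have : d ≤ d ^ (m + k) := by
        simpa using Nat.pow_le_pow_right (by omega : 0 < d) (by omega : 1 ≤ m + k)
      omega
    obtain ⟨y, z, hy, hz, hxyz⟩ := ih (x := x % (d ^ (m + k) - 1)) (by
      have := Nat.mod_lt x hF; omega)
    have ht := div_pow_sub_one_le hd (by omega : 1 ≤ m + k) (by rwa [← add_assoc] at hx)
    refine ⟨x / (d ^ (m + k) - 1) * (d ^ (m + k) - 1) + y, z,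
      ((isPalindrome_pow_sub_one hd _).isSumOfPalindromes_mul _ |>.add hy).mono ?_, hz, ?_⟩
    · rw [Nat.succ_mul]; omega
    · rw [add_assoc, ← hxyz, Nat.div_add_mod']

theorem isSumOfPalindromes_of_lt_pow (hd : 1 < d) {k n : ℕ} (hn : n < d ^ (k + 1)) :
    IsSumOfPalindromes d (k * (d + 1) + 1) n := by
  obtain ⟨y, z, hy, hz, rfl⟩ := exists_isSumOfPalindromes_add_lt_pow hd le_rfl k
    (by rwa [add_comm] at hn)
  exact hy.add (isPalindrome_of_lt (by simpa using hz)).isSumOfPalindromes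

theorem exists_mod_eq_mul_le_lt {n K X r : ℕ} (hn : 0 < n) (hK : 0 < K) (hr : r * K ≤ X) :
    ∃ a, a % n = r % n ∧ a * K ≤ X ∧ X < (a + n) * K := by
  have hq := Nat.div_mul_le_self (X - r * K) (n * K)
  have hq' := Nat.lt_div_mul_add (a := X - r * K) (Nat.mul_pos hn hK)
  set q := (X - r * K) / (n * K)
  have e₁ : (r + n * q) * K = r * K + q * (n * K) := by ring
  have e₂ : (r + n * q + n) * K = r * K + q * (n * K) + n * K := by ring
  exact ⟨r + n * q, by simp, by omega, by omega⟩

theorem exists_mirror_step (hd : 1 < d) {e T : ℕ} (hlo : (d + 1) * d ^ (e + 2) ≤ T)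
    (hhi : T ≤ (d ^ 2 + d + 1) * d ^ (e + 2)) :
    ∃ a T', a ≤ d ^ 2 + d ∧ T = a * (1 + d ^ (e + 2)) + d * T' ∧
      (d + 1) * d ^ e ≤ T' ∧ T' ≤ (d ^ 2 + d + 1) * d ^ e := by
  have hD : d ^ (e + 2) = d * (d * d ^ e) := by ring
  have hP : 0 < d ^ e := Nat.pow_pos (by omega)
  set P := d ^ e
  rw [hD] at hlo hhi ⊢
  have hr : T % d * (1 + d * (d * P)) ≤ T - d * ((d + 1) * P) := by
    have ht : T % d + 1 ≤ d := Nat.mod_lt T (by omega)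
    have hdP : 1 ≤ d * P := Nat.mul_pos (by omega) hP
    have : T % d * (1 + d * (d * P)) + d * ((d + 1) * P) ≤ T := by
      nlinarith [Nat.mul_le_mul_right (1 + d * (d * P)) ht]
    omega
  obtain ⟨a, hmod, hle, hlt⟩ := exists_mod_eq_mul_le_lt (n := d) (by omega) (by omega) hr
  have hdvd : d ∣ T - a * (1 + d * (d * P)) := by
    have haT : a ≤ T :=
      (Nat.le_mul_of_pos_right a (by omega : 0 < 1 + d * (d * P))).trans (by omega)
    have h1 : d ∣ T - a := (Nat.modEq_iff_dvd' haT).mp (hmod.trans (Nat.mod_mod T d))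
    have h2 : d ∣ a * (d * (d * P)) := Dvd.intro_left (a * (d * P)) (by ring)
    rw [mul_one_add, ← Nat.sub_sub]
    exact Nat.dvd_sub h1 h2
  obtain ⟨T', hT'⟩ := hdvd
  have hT : T = a * (1 + d * (d * P)) + d * T' := by omega
  have hL : d * ((d + 1) * P) ≤ T := le_trans (by nlinarith) hlo
  refine ⟨a, T', ?_, hT, ?_, ?_⟩
  · by_contra! ha
    have : (d ^ 2 + d + 1) * (1 + d * (d * P)) ≤ a * (1 + d * (d * P)) :=
      Nat.mul_le_mul_right _ ha
    nlinarith
  · exact Nat.le_of_mul_le_mul_left (by omega) (by omega : 0 < d)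
  · have : T' < (d + 1) * P + 1 + d * (d * P) := by
      refine Nat.lt_of_mul_lt_mul_left (a := d) ?_
      have e₁ : (a + d) * (1 + d * (d * P)) = a * (1 + d * (d * P)) + d * (1 + d * (d * P)) := by
        ring
      have e₂ : d * ((d + 1) * P + 1 + d * (d * P)) = d * ((d + 1) * P) + d * (1 + d * (d * P)) :=
        by ring
      omega
    nlinarith

theorem Nat.ofDigits_cons_append_singleton (a : ℕ) (w : List ℕ) :
    Nat.ofDigits d (a :: w ++ [a]) = a * (1 + d ^ (w.length + 1)) + d * Nat.ofDigits d w := by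
  rw [cons_append, Nat.ofDigits_cons, Nat.ofDigits_append, Nat.ofDigits_singleton]
  ring

theorem exists_mirror_decomposition (hd : 1 < d) (e m : ℕ) {T : ℕ}
    (hlo : (d + 1) * d ^ (e + 2 * m) ≤ T) (hhi : T ≤ (d ^ 2 + d + 1) * d ^ (e + 2 * m)) :
    ∃ u r, u.length = m ∧ (∀ a ∈ u, a ≤ d ^ 2 + d) ∧ r ≤ (d ^ 2 + d + 1) * d ^ e ∧
      T = Nat.ofDigits d (u ++ replicate (e + 1) 0 ++ u.reverse) + d ^ m * r := by
  induction m generalizing T with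
  | zero => exact ⟨[], T, rfl, by simp, hhi, by simp⟩
  | succ m ih =>
    rw [show e + 2 * (m + 1) = e + 2 * m + 2 by ring] at hlo hhi
    obtain ⟨a, T', ha, rfl, hlo', hhi'⟩ := exists_mirror_step hd hlo hhi
    obtain ⟨u, r, rfl, hu, hr, rfl⟩ := ih hlo' hhi'
    refine ⟨a :: u, r, rfl, forall_mem_cons.mpr ⟨ha, hu⟩, hr, ?_⟩
    have hlist : a :: u ++ replicate (e + 1) 0 ++ (a :: u).reverse =
        a :: (u ++ replicate (e + 1) 0 ++ u.reverse) ++ [a] := by simp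
    have hlen : (u ++ replicate (e + 1) 0 ++ u.reverse).length + 1 = e + 2 * u.length + 2 := by
      simp; ring
    rw [hlist, Nat.ofDigits_cons_append_singleton, hlen, pow_succ']
    ring

theorem Nat.ofDigits_append_reverse_add {u v : List ℕ} (h : u.length = v.length) :
    Nat.ofDigits d (u ++ u.reverse) + Nat.ofDigits d (v ++ v.reverse) =
      Nat.ofDigits d (zipWith (· + ·) u v ++ (zipWith (· + ·) u v).reverse) := by
  rw [Nat.ofDigits_add_ofDigits_eq_ofDigits_zipWith_of_length_eq (by simp [h]),
    zipWith_append h, reverse_zipWith h]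

theorem isSumOfPalindromes_ofDigits_append_reverse (hd : 1 < d) (k : ℕ) {s : List ℕ}
    (hs : ∀ x ∈ s, x ≤ k * (d - 1)) :
    IsSumOfPalindromes d k (Nat.ofDigits d (k :: s ++ (k :: s).reverse)) := by
  induction k generalizing s with
  | zero =>
    have hs0 : s = replicate s.length 0 :=
      eq_replicate_iff.mpr ⟨rfl, fun x hx => by simpa using hs x hx⟩
    rw [hs0]
    simpa [Nat.ofDigits_cons, Nat.ofDigits_append] using IsSumOfPalindromes.zero d 0
  | succ k ih =>
    have hpal : IsPalindrome d (Nat.ofDigits d (1 :: s.map (min · (d - 1)) ++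
        (1 :: s.map (min · (d - 1))).reverse)) := by
      refine isPalindrome_ofDigits_append_reverse hd one_pos ?_
      simp only [mem_cons, mem_map]
      rintro x (rfl | ⟨y, -, rfl⟩) <;> omega
    have hrest := ih (s := s.map (· - (d - 1))) (by
      simp only [mem_map]
      rintro x ⟨y, hy, rfl⟩
      have := hs y hy
      rw [Nat.add_one_mul] at this
      omega)
    have hsum : zipWith (· + ·) (1 :: s.map (min · (d - 1))) (k :: s.map (· - (d - 1))) =
        (k + 1) :: s := by
      simp only [zipWith_cons_cons, zipWith_map, zipWith_self, cons.injEq]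
      refine ⟨by ring, ?_⟩
      conv_rhs => rw [← map_id s]
      exact map_congr_left fun x _ => by dsimp; omega
    have := hpal.isSumOfPalindromes.add hrest
    rwa [Nat.ofDigits_append_reverse_add (by simp), hsum, add_comm 1] at this

theorem isSumOfPalindromes_of_window (hd : 1 < d) {m T : ℕ}
    (hlo : (d + 1) * d ^ (2 * m + 1) ≤ T) (hhi : T ≤ (d ^ 2 + d + 1) * d ^ (2 * m + 1)) :
    IsSumOfPalindromes d (6 * d + 2) ((2 * d + 2) * (1 + d ^ (2 * m + 3)) + d * T) := by
  obtain ⟨u, r, rfl, hu, hr, rfl⟩ :=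
    exists_mirror_decomposition hd 1 m (T := T) (by rwa [Nat.add_comm 1]) (by rwa [Nat.add_comm 1])
  have hsplit := isSumOfPalindromes_ofDigits_append_reverse hd (2 * d + 2) (s := u ++ [0]) (by
    simp only [mem_append, mem_singleton]
    rintro x (hx | rfl)
    · have := hu x hx
      obtain ⟨c, rfl⟩ : ∃ c, d = c + 1 := ⟨d - 1, by omega⟩
      simp only [Nat.add_sub_cancel] at this ⊢
      nlinarith
    · exact Nat.zero_le _)
  have htail := isSumOfPalindromes_mul_pow hd (j := 4) (r := r) (by nlinarith) (u.length + 1)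
  have hlist : (2 * d + 2) :: (u ++ [0]) ++ ((2 * d + 2) :: (u ++ [0])).reverse =
      (2 * d + 2) :: (u ++ replicate (1 + 1) 0 ++ u.reverse) ++ [2 * d + 2] := by simp
  rw [hlist, Nat.ofDigits_cons_append_singleton] at hsplit
  convert (hsplit.add htail).mono (show 2 * d + 2 + 4 * d ≤ 6 * d + 2 by omega) using 1
  simp only [length_append, length_replicate, length_reverse, pow_succ]
  ring_nf

theorem isSumOfPalindromes_of_pow_le_of_lt_pow (hd : 1 < d) {m n : ℕ}
    (hlo : d ^ (2 * m + 7) ≤ n) (hhi : n < d ^ (2 * m + 9)) :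
    IsSumOfPalindromes d (11 * d + 8) n := by
  obtain ⟨Q, hQ⟩ : ∃ Q, d ^ (2 * m + 1) = Q := ⟨_, rfl⟩
  have hQ3 : d ^ (2 * m + 3) = d ^ 2 * Q := by rw [← hQ]; ring
  have hQ4 : d ^ (2 * m + 4) = d * (d ^ 2 * Q) := by rw [← hQ]; ring
  have hQ7 : d ^ (2 * m + 7) = d ^ 4 * (d ^ 2 * Q) := by rw [← hQ]; ring
  have hτ : (2 * d + 2) * (1 + d ^ (2 * m + 3)) + d * ((d + 1) * Q) ≤ n := by
    have h1 : 1 ≤ d ^ 2 * Q := by rw [← hQ3]; exact Nat.one_le_pow _ _ (by omega)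
    have h5 : 5 * d + 5 ≤ d ^ 4 := by nlinarith [pow_succ d 3, Nat.pow_le_pow_left hd 3]
    calc (2 * d + 2) * (1 + d ^ (2 * m + 3)) + d * ((d + 1) * Q)
        ≤ (2 * d + 2) * (2 * (d ^ 2 * Q)) + (d + 1) * (d ^ 2 * Q) := by rw [hQ3]; nlinarith
      _ = (5 * d + 5) * (d ^ 2 * Q) := by ring
      _ ≤ d ^ 4 * (d ^ 2 * Q) := Nat.mul_le_mul_right _ h5
      _ ≤ n := hQ7 ▸ hlo
  obtain ⟨x, rfl⟩ := Nat.exists_eq_add_of_le hτ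
  obtain ⟨y, z, hy, hz, rfl⟩ := exists_isSumOfPalindromes_add_lt_pow hd (m := 2 * m + 4)
    (by omega) 5 (x := x) (by rw [show 2 * m + 4 + 5 = 2 * m + 9 by ring]; omega)
  have hzd : z / d < d ^ 2 * Q := by
    rw [Nat.div_lt_iff_lt_mul (by omega), mul_comm, ← hQ4]; exact hz
  have hT := isSumOfPalindromes_of_window hd (m := m) (T := (d + 1) * Q + z / d)
    (by rw [hQ]; exact Nat.le_add_right _ _) (by rw [hQ]; nlinarith)
  have := (hy.add (isPalindrome_of_lt (Nat.mod_lt z (by omega))).isSumOfPalindromes).add hT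
  convert this.mono (show 5 * (d + 1) + 1 + (6 * d + 2) ≤ 11 * d + 8 by omega) using 1
  have := Nat.mod_add_div z d
  rw [Nat.mul_add d ((d + 1) * Q)]
  omega

end

theorem palindromes_additive_basis_bounded :
    ∃ C : ℕ, ∀ d : ℕ, 2 ≤ d → ∀ n : ℕ,
      ∃ l : List ℕ, l.length ≤ C * d ∧ (∀ p ∈ l, IsPalindrome d p) ∧ l.sum = n := by
  refine ⟨15, fun d hd n => ?_⟩
  show IsSumOfPalindromes d (15 * d) n
  rcases lt_or_ge n (d ^ 7) with hn | hn
  · exact (isSumOfPalindromes_of_lt_pow hd (k := 6) hn).mono (by omega)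
  · have hn0 : n ≠ 0 := (Nat.pow_pos (by omega : 0 < d)).trans_le hn |>.ne'
    have hlog : 7 ≤ Nat.log d n := Nat.le_log_of_pow_le hd hn
    refine (isSumOfPalindromes_of_pow_le_of_lt_pow hd (m := (Nat.log d n - 7) / 2) ?_ ?_).mono
      (by omega)
    · exact (Nat.pow_le_pow_right (by omega) (by omega)).trans
        (Nat.pow_log_le_self d hn0)
    · exact (Nat.lt_pow_succ_log_self hd n).trans_le (Nat.pow_le_pow_right (by omega) (by omega))
end

section
/- Let d ≥ 2 and let l, k be natural numbers with l ≥ k + 6. For every n with d^{l−1} ≤ n < d^l and n divisible by d^k, one can write n = s + m where s is a sum of at most 2d numbers, each of the form c·(d^{l'−1} + d^k) for some 0 ≤ c < d and l' ∈ {l−1, l−2, l−3}, and where m satisfies d^{l−2} ≤ m < d^{l−1} and m is divisible by d^{k+1}. -/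
/-!
Write `n = d ^ k * t` and `G = d ^ (l - k - 4)`, so that `d ^ 3 * G ≤ t < d ^ 4 * G`. Dividing
`t - d ^ 3 * G` by the step `(d - 1) * d * G` gives a quotient `q < d ^ 2`; writing `q + 1 = a * d + b`
with `a < d` and `1 ≤ b ≤ d`, the `a` copies of `(d - 1) * (d ^ 2 * G + 1)` and `b` copies of
`(d - 1) * (d * G + 1)` make up `(q + 1)` steps plus a small error, so they bring `t` to just below
`d ^ 3 * G`, at the cost of at most one step. As `d ∣ G`, subtracting `c * (G + 1)`, with `c` the
residue modulo `d` of what is left, clears the last digit, and `G ≥ d ^ 2` keeps the rest above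
`d ^ 2 * G`.
-/

section
variable {d G t : ℕ}

lemma exists_shifted_digits {q : ℕ} (hd : 0 < d) (hq : q < d ^ 2) :
    ∃ a b, a < d ∧ b ≤ d ∧ a * d + b = q + 1 := by
  refine ⟨q / d, q % d + 1, ?_, Nat.mod_lt q hd, ?_⟩
  · rw [Nat.div_lt_iff_lt_mul hd]; rwa [sq] at hq
  · rw [mul_comm]; have := Nat.div_add_mod q d; omega

lemma exists_mul_succ_add_dvd {r : ℕ} (hd : 0 < d) (hG : d ∣ G) (hr : (d - 1) * (G + 1) ≤ r) :
    ∃ c m, c < d ∧ r = c * (G + 1) + m ∧ d ∣ m := by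
  have hc : r % d * (G + 1) ≤ r :=
    (Nat.mul_le_mul_right _ (Nat.le_sub_one_of_lt (Nat.mod_lt r hd))).trans hr
  refine ⟨r % d, r - r % d * (G + 1), Nat.mod_lt r hd, by omega, ?_⟩
  have hsplit : r - r % d * (G + 1) = d * (r / d) - r % d * G := by
    have := Nat.div_add_mod r d
    rw [Nat.mul_succ]
    omega
  rw [hsplit]
  exact Nat.dvd_sub (dvd_mul_right d _) (dvd_mul_of_dvd_right hG _)

lemma exists_coarse_approx (hd : 2 ≤ d) (hG : 0 < G) (h1 : d ^ 3 * G ≤ t) (h2 : t < d ^ 4 * G) :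
    ∃ a b, a < d ∧ b ≤ d ∧
      t < d ^ 3 * G + (a * ((d - 1) * (d ^ 2 * G + 1)) + b * ((d - 1) * (d * G + 1))) ∧
      d ^ 3 * G + (a * ((d - 1) * (d ^ 2 * G + 1)) + b * ((d - 1) * (d * G + 1))) ≤
        t + (d - 1) * (d * G + 2 * d - 1) := by
  obtain ⟨e, rfl⟩ : ∃ e, d = e + 1 := ⟨d - 1, by omega⟩
  rw [Nat.add_sub_cancel,
    show (e + 1) * G + 2 * (e + 1) - 1 = e * G + G + 2 * e + 1 by ring_nf; omega]
  set s := e * (e + 1) * G with hs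
  have hs0 : 0 < s := Nat.mul_pos (Nat.mul_pos (by omega) (by omega)) hG
  have hq : (t - (e + 1) ^ 3 * G) / s < (e + 1) ^ 2 := by
    rw [Nat.div_lt_iff_lt_mul hs0]
    have : (e + 1) ^ 2 * s + (e + 1) ^ 3 * G = (e + 1) ^ 4 * G := by rw [hs]; ring
    omega
  obtain ⟨a, b, ha, hb, hab⟩ := exists_shifted_digits (by omega) hq
  refine ⟨a, b, ha, hb, ?_⟩
  have hP : a * (e * ((e + 1) ^ 2 * G + 1)) + b * (e * ((e + 1) * G + 1)) =
      (a * (e + 1) + b) * s + (a + b) * e := by rw [hs]; ring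
  have hloss : e * (e * G + G + 2 * e + 1) = s + (2 * e + 1) * e := by rw [hs]; ring
  have hsum : (a + b) * e ≤ (2 * e + 1) * e := Nat.mul_le_mul_right _ (by omega)
  have hdiv := Nat.div_add_mod' (t - (e + 1) ^ 3 * G) s
  have hmod := Nat.mod_lt (t - (e + 1) ^ 3 * G) hs0
  rw [hP, hab, hloss, add_one_mul]
  constructor <;> omega

/-- Equality holds for `d = 2`, `G = 4`; this is why `l ≥ k + 6` is needed. -/
lemma sq_mul_add_loss_le_cube_mul (hd : 2 ≤ d) (hG : d ^ 2 ≤ G) :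
    d ^ 2 * G + (d - 1) * (d * G + 2 * d - 1) + (d - 1) * (G + 1) ≤ d ^ 3 * G := by
  obtain ⟨f, rfl⟩ : ∃ f, d = f + 2 := ⟨d - 2, by omega⟩
  rw [show f + 2 - 1 = f + 1 by omega,
    show (f + 2) * G + 2 * (f + 2) - 1 = (f + 2) * G + 2 * f + 3 by omega]
  have h : 2 * f + 4 ≤ G * (f ^ 2 + 3 * f + 1) := by nlinarith
  nlinarith [Nat.mul_le_mul_left (f + 1) h]

theorem exists_passage_coeffs (hd : 2 ≤ d) (hG : d ^ 2 ≤ G) (hdG : d ∣ G)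
    (h1 : d ^ 3 * G ≤ t) (h2 : t < d ^ 4 * G) :
    ∃ a b c m, a < d ∧ b ≤ d ∧ c < d ∧
      t = a * ((d - 1) * (d ^ 2 * G + 1)) + b * ((d - 1) * (d * G + 1)) + c * (G + 1) + m ∧
      d ^ 2 * G ≤ m ∧ m < d ^ 3 * G ∧ d ∣ m := by
  obtain ⟨a, b, ha, hb, hlt, hle⟩ :=
    exists_coarse_approx hd (lt_of_lt_of_le (by positivity) hG) h1 h2
  set P := a * ((d - 1) * (d ^ 2 * G + 1)) + b * ((d - 1) * (d * G + 1))
  have hloss := sq_mul_add_loss_le_cube_mul hd hG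
  obtain ⟨r, rfl⟩ : ∃ r, t = P + r := ⟨t - P, by omega⟩
  obtain ⟨c, m, hc, rfl, hm⟩ := exists_mul_succ_add_dvd (r := r) (by omega) hdG (by omega)
  have hcG := Nat.mul_le_mul_right (G + 1) (Nat.le_sub_one_of_lt hc)
  exact ⟨a, b, c, m, ha, hb, hc, by ring, by omega, by omega, hm⟩

end

theorem inductive_passage (d l k n : ℕ) (hd : 2 ≤ d) (hl : k + 6 ≤ l)
    (h1 : d ^ (l - 1) ≤ n) (h2 : n < d ^ l) (h3 : d ^ k ∣ n) :
    ∃ (S : List ℕ) (m : ℕ),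
      S.length ≤ 2 * d ∧
      (∀ s ∈ S, ∃ c l', c < d ∧ (l' = l - 1 ∨ l' = l - 2 ∨ l' = l - 3) ∧
        s = c * (d ^ (l' - 1) + d ^ k)) ∧
      n = S.sum + m ∧ d ^ (l - 2) ≤ m ∧ m < d ^ (l - 1) ∧ d ^ (k + 1) ∣ m := by
  obtain ⟨j, rfl⟩ : ∃ j, l = k + 4 + j := ⟨l - k - 4, by omega⟩
  obtain ⟨t, rfl⟩ := h3
  have hdk : 0 < d ^ k := by positivity
  rw [show k + 4 + j - 1 = k + (3 + j) by omega, pow_add, pow_add] at h1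
  rw [add_assoc, pow_add, pow_add] at h2
  obtain ⟨a, b, c, m, ha, hb, hc, rfl, hm1, hm2, hm3⟩ := exists_passage_coeffs hd
    (Nat.pow_le_pow_right (by omega) (by omega)) (dvd_pow_self d (by omega))
    (Nat.le_of_mul_le_mul_left h1 hdk) (Nat.lt_of_mul_lt_mul_left h2)
  refine ⟨.replicate a ((d - 1) * (d ^ (k + 2 + j) + d ^ k)) ++
      .replicate b ((d - 1) * (d ^ (k + 1 + j) + d ^ k)) ++ [c * (d ^ (k + j) + d ^ k)],
    d ^ k * m, ?_, ?_, ?_, ?_, ?_, ?_⟩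
  · simp only [List.length_append, List.length_replicate, List.length_singleton]; omega
  · simp only [List.mem_append, List.mem_replicate, List.mem_singleton]
    rintro s ((⟨-, rfl⟩ | ⟨-, rfl⟩) | rfl)
    · exact ⟨d - 1, k + 3 + j, by omega, by omega, by rw [show k + 3 + j - 1 = k + 2 + j by omega]⟩
    · exact ⟨d - 1, k + 2 + j, by omega, by omega, by rw [show k + 2 + j - 1 = k + 1 + j by omega]⟩
    · exact ⟨c, k + 1 + j, hc, by omega, by rw [show k + 1 + j - 1 = k + j by omega]⟩
  · simp only [List.sum_append, List.sum_replicate, List.sum_singleton, smul_eq_mul]; ring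
  · rw [show k + 4 + j - 2 = k + (2 + j) by omega, pow_add, pow_add]
    exact Nat.mul_le_mul_left _ hm1
  · rw [show k + 4 + j - 1 = k + (3 + j) by omega, pow_add, pow_add]
    exact Nat.mul_lt_mul_of_pos_left hm2 hdk
  · rw [pow_succ]
    exact mul_dvd_mul_left _ hm3
end

section
/- Let d ≥ 2 and l ≥ 8, and let n satisfy d^{l−1} ≤ n < d^l. Then n can be written as n = s + f(n), where s is a sum of O(d) palindromes of the form (d−1)·d^{j} + (d−1) with j ∈ {l−2, l−3, l−4, l−5}, and f(n) = (d−1)d^{l−2} + (d−1)d^{l−3} + (d−1)d^{l−4} + m with d² − 2d ≤ m < d^{l−4}. Concretely: there exist natural numbers a ≤ d−1, b ≤ d, e ≤ d, g ≤ d such that n − a·((d−1)d^{l−2}+(d−1)) − b·((d−1)d^{l−3}+(d−1)) − e·((d−1)d^{l−4}+(d−1)) − g·((d−1)d^{l−5}+(d−1)) lies in [(d−1)d^{l−2}+(d−1)d^{l−3}+(d−1)d^{l−4}+d²−2d, (d−1)d^{l−2}+(d−1)d^{l−3}+(d−1)d^{l−4}+d^{l−4}). -/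
/-!
Put `p = d ^ (l - 5)` and `P j = (d - 1) * p * d ^ j + (d - 1)`. Since
`(d - 1) * p * (d ^ 3 + d ^ 2 + d) = p * d ^ 4 - p * d`, removing the three leading terms of
`f(n)` and the offset `d ^ 2 - 2 * d` from `n` leaves `N + W`, where
`N = n - p * d ^ 4 < (d - 1) * p * d ^ 4` and `W = p * d - (d ^ 2 - 2 * d)`. Divide `N + W`
greedily by `P 3, P 2, P 1, P 0` with quotients capped at `d - 1, d, d, d`. The remainder
before dividing by `P j` stays below `(d - 1) * p * d ^ (j + 1) + W`: an uncapped quotient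
leaves less than `P j`, and a quotient capped at `c` leaves less than `(d - 1) * p * d ^ j + W`
because the bound is at most `(c + 1) * (d - 1) * p * d ^ j + W`. As `P 0 ≤ W` once
`d ^ 2 ≤ p`, the last remainder is below `W`, which puts `m` in `[d ^ 2 - 2 * d, p * d)`.
-/

theorem exists_le_lt_eq_mul_add {c Y q Z B R : ℕ} (hYq : Y + q ≤ B) (hZ : Z ≤ B)
    (hR : R < c * Y + Z) : ∃ a ≤ c, ∃ s < B, R = a * (Y + q) + s := by
  by_cases hc : c * (Y + q) ≤ R
  · exact ⟨c, le_rfl, R - c * (Y + q), by rw [mul_add] at hc ⊢; omega, by omega⟩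
  · have hpos : 0 < Y + q := Nat.pos_of_ne_zero fun h => by simp [h] at hc
    refine ⟨R / (Y + q), (Nat.div_lt_of_lt_mul (by linarith)).le, R % (Y + q),
      (Nat.mod_lt R hpos).trans_le hYq, (Nat.div_add_mod' R (Y + q)).symm⟩

theorem exists_greedy_decomposition {d p n : ℕ} (hd : 2 ≤ d) (hp : d ^ 2 ≤ p)
    (h1 : p * d ^ 4 ≤ n) (h2 : n < p * d ^ 5) :
    ∃ a b e g m : ℕ, a ≤ d - 1 ∧ b ≤ d ∧ e ≤ d ∧ g ≤ d ∧
      n = a * ((d - 1) * (p * d ^ 3) + (d - 1))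
        + b * ((d - 1) * (p * d ^ 2) + (d - 1))
        + e * ((d - 1) * (p * d) + (d - 1))
        + g * ((d - 1) * p + (d - 1))
        + ((d - 1) * (p * d ^ 3) + (d - 1) * (p * d ^ 2) + (d - 1) * (p * d) + m) ∧
      d ^ 2 - 2 * d ≤ m ∧ m < p * d := by
  obtain ⟨q, rfl⟩ : ∃ q, d = q + 1 := ⟨d - 1, by omega⟩
  obtain ⟨D, hD⟩ : ∃ D, (q + 1) ^ 2 = 2 * (q + 1) + D :=
    Nat.exists_eq_add_of_le (by nlinarith)
  obtain ⟨W, hW⟩ : ∃ W, p * (q + 1) = D + W := Nat.exists_eq_add_of_le (by nlinarith)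
  obtain ⟨N, rfl⟩ := Nat.exists_eq_add_of_le h1
  rw [Nat.add_sub_cancel, show (q + 1) ^ 2 - 2 * (q + 1) = D by omega]
  have hqpW : q * p + q ≤ W := by nlinarith
  obtain ⟨a, ha, r₁, hr₁, e₁⟩ := exists_le_lt_eq_mul_add (c := q)
    (Y := q * (p * (q + 1) ^ 3)) (q := q) (Z := q * (p * (q + 1) ^ 3) + W) (R := N + W)
    (by omega) le_rfl
    (by linarith [show p * (q + 1) ^ 5 =
      p * (q + 1) ^ 4 + (q * (q * (p * (q + 1) ^ 3)) + q * (p * (q + 1) ^ 3)) by ring])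
  obtain ⟨b, hb, r₂, hr₂, e₂⟩ := exists_le_lt_eq_mul_add (c := q + 1)
    (Y := q * (p * (q + 1) ^ 2)) (q := q) (Z := W) (B := q * (p * (q + 1) ^ 2) + W)
    (by omega) (by omega) (hr₁.trans_eq (by ring))
  obtain ⟨e, he, r₃, hr₃, e₃⟩ := exists_le_lt_eq_mul_add (c := q + 1)
    (Y := q * (p * (q + 1))) (q := q) (Z := W) (B := q * (p * (q + 1)) + W)
    (by omega) (by omega) (hr₂.trans_eq (by ring))
  obtain ⟨g, hg, r₄, hr₄, e₄⟩ := exists_le_lt_eq_mul_add (c := q + 1)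
    (Y := q * p) (q := q) (Z := W) hqpW le_rfl (hr₃.trans_eq (by ring))
  refine ⟨a, b, e, g, D + r₄, ha, hb, he, hg, ?_, le_add_right le_rfl, by omega⟩
  have hsplit : p * (q + 1) ^ 4 = q * (p * (q + 1) ^ 3) + q * (p * (q + 1) ^ 2)
      + q * (p * (q + 1)) + p * (q + 1) := by ring
  linarith

theorem preprocessing (d l n : ℕ) (hd : 2 ≤ d) (hl : 8 ≤ l)
    (h1 : d ^ (l - 1) ≤ n) (h2 : n < d ^ l) :
    ∃ a b e g m : ℕ, a ≤ d - 1 ∧ b ≤ d ∧ e ≤ d ∧ g ≤ d ∧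
      n = a * ((d - 1) * d ^ (l - 2) + (d - 1))
        + b * ((d - 1) * d ^ (l - 3) + (d - 1))
        + e * ((d - 1) * d ^ (l - 4) + (d - 1))
        + g * ((d - 1) * d ^ (l - 5) + (d - 1))
        + ((d - 1) * d ^ (l - 2) + (d - 1) * d ^ (l - 3) + (d - 1) * d ^ (l - 4) + m) ∧
      d ^ 2 - 2 * d ≤ m ∧ m < d ^ (l - 4) := by
  obtain ⟨k, rfl⟩ : ∃ k, l = k + 5 := ⟨l - 5, by omega⟩
  simp only [Nat.reduceSubDiff, Nat.add_sub_cancel, pow_add, pow_one] at h1 h2 ⊢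
  exact exists_greedy_decomposition hd (pow_le_pow_right₀ (by omega) (by omega)) h1 h2
end

section
/- Let d ≥ 2, m ≥ 0, and let (a_k)_{k=0}^{m} satisfy 0 ≤ a_k < d and a_0 ≠ 0. Then n = Σ_{k=0}^{m} a_k·(d^{2m+1−k} + d^k) satisfies d^{2m+1} ≤ n < d^{2m+2}, and the digit of n at position j in base d equals a_j for 0 ≤ j ≤ m and a_{2m+1−j} for m+1 ≤ j ≤ 2m+1. -/
/-!
Pairing the term `a k * d ^ (2m+1-k)` with `a k * d ^ k`, the number `n` is the base-`d` numeral
whose digit string is the palindrome `a 0, a 1, …, a m, a m, …, a 0` of length `2m+2`. All these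
digits are `< d` and the leading one is `a 0 ≠ 0`, so this string is exactly `Nat.digits d n`;
the bounds on `n` and the value of each digit are then read off from the digit list.
-/

open Finset

theorem Finset.sum_range_two_mul_add_two_eq_sum_add_reflect {M : Type*} [AddCommMonoid M]
    (f : ℕ → M) (m : ℕ) :
    ∑ i ∈ range (2 * m + 2), f i = ∑ k ∈ range (m + 1), (f k + f (2 * m + 1 - k)) := by
  rw [show 2 * m + 2 = (m + 1) + (m + 1) by omega, sum_range_add, sum_add_distrib,
    ← sum_range_reflect (fun k => f (2 * m + 1 - k)) (m + 1)]
  congr 1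
  refine sum_congr rfl fun k hk => ?_
  congr 1
  have := mem_range.1 hk
  omega

theorem Nat.ofDigits_map_range (d : ℕ) (f : ℕ → ℕ) (L : ℕ) :
    Nat.ofDigits d ((List.range L).map f) = ∑ i ∈ range L, f i * d ^ i := by
  induction L with
  | zero => simp
  | succ L ih =>
    rw [List.range_succ, List.map_append, Nat.ofDigits_append, ih, sum_range_succ]
    simp [mul_comm]

theorem symmetric_sum_digits (d m : ℕ) (hd : 2 ≤ d) (a : ℕ → ℕ)
    (ha : ∀ k ≤ m, a k < d) (ha0 : a 0 ≠ 0) :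
    let n := ∑ k ∈ Finset.range (m + 1), a k * (d ^ (2 * m + 1 - k) + d ^ k)
    d ^ (2 * m + 1) ≤ n ∧ n < d ^ (2 * m + 2) ∧
    (∀ j ≤ m, n / d ^ j % d = a j) ∧
    (∀ j, m + 1 ≤ j → j ≤ 2 * m + 1 → n / d ^ j % d = a (2 * m + 1 - j)) := by
  intro n
  set b : ℕ → ℕ := fun i => a (min i (2 * m + 1 - i))
  set L := (List.range (2 * m + 2)).map b
  have hn : n = Nat.ofDigits d L := by
    rw [Nat.ofDigits_map_range, sum_range_two_mul_add_two_eq_sum_add_reflect]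
    refine sum_congr rfl fun k hk => ?_
    have := mem_range.1 hk
    simp only [b, show min k (2 * m + 1 - k) = k by omega,
      show min (2 * m + 1 - k) (2 * m + 1 - (2 * m + 1 - k)) = k by omega]
    ring
  have hdigits : Nat.digits d n = L := by
    rw [hn]
    refine Nat.digits_ofDigits d hd L ?_ fun _ => ?_
    · simp only [L, List.mem_map, List.mem_range]
      rintro _ ⟨i, hi, rfl⟩
      exact ha _ (by omega)
    · simpa [L, List.getLast_map, b] using ha0
  have hdigit : ∀ j < 2 * m + 2, n / d ^ j % d = b j := fun j hj => by
    rw [← Nat.getD_digits n j hd, hdigits]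
    simp [L, hj]
  refine ⟨?_, ?_, fun j hj => ?_, fun j hj₁ hj₂ => ?_⟩
  · rw [← Nat.lt_digits_length_iff hd, hdigits]
    simp [L]
  · rw [← Nat.digits_length_le_iff hd, hdigits]
    simp [L]
  · rw [hdigit j (by omega)]
    simp only [b, show min j (2 * m + 1 - j) = j by omega]
  · rw [hdigit j (by omega)]
    simp only [b, show min j (2 * m + 1 - j) = 2 * m + 1 - j by omega]
end
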